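/- Let F be a finite field with q elements, O = F[[z]], and R = F[[z^2, z^3]] = {f ∈ O : coefficient of z is 0}. For a ∈ F set M_a = (1 + a z)·R ⊆ O. Then the M_a are pairwise distinct R-submodules of O, each with valuation set val_z(M_a) = {0} ∪ {n ∈ ℕ : n ≥ 2}, and every R-submodule M ⊆ O with val_z(M) = {0} ∪ {n ≥ 2} equals M_a for a unique a ∈ F. In particular there are exactly q = q^δ such modules (δ = 1). -/

import Mathlib

/-- The local ring `R = F[[z²,z³]] = {f ∈ F[[z]] : coefficient of z is 0}` of the
cusp `x² = y³`, as a subalgebra of `O = F[[z]]`. -/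
def Rcusp (F : Type*) [Field F] : Subalgebra F (PowerSeries F) where
  carrier := {f | PowerSeries.coeff (R := F) 1 f = 0}
  add_mem' := by
    intro f g hf hg
    simp only [Set.mem_setOf_eq, map_add] at *
    rw [hf, hg, add_zero]
  mul_mem' := by
    intro f g hf hg
    simp only [Set.mem_setOf_eq] at *
    rw [PowerSeries.coeff_mul, Finset.Nat.sum_antidiagonal_eq_sum_range_succ_mk]
    simp [Finset.sum_range_succ, hf, hg]
  algebraMap_mem' := by
    intro r
    simp [Set.mem_setOf_eq, PowerSeries.algebraMap_apply, PowerSeries.coeff_C]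

/-- The `R`-submodule `M_a = (1 + a z)·R ⊆ O`. -/
noncomputable def Mmod (F : Type*) [Field F] (a : F) :
    Submodule ↥(Rcusp F) (PowerSeries F) :=
  Submodule.span ↥(Rcusp F) {1 + PowerSeries.C (R := F) a * PowerSeries.X}

/-- The valuation set `val_z(M) = {ord_z f : f ∈ M, f ≠ 0}` of a submodule `M ⊆ O`. -/
def valset (F : Type*) [Field F] (M : Submodule ↥(Rcusp F) (PowerSeries F)) : Set ℕ :=
  {n | ∃ f ∈ M, PowerSeries.coeff (R := F) n f ≠ 0 ∧ ∀ m < n, PowerSeries.coeff (R := F) m f = 0}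

/-!
Since `R` consists of the series with vanishing `z`-coefficient, a series `f` lies in
`M_a = (1 + a z) R` exactly when `f₁ = a f₀`. If `val_z(M) = {0} ∪ {n ≥ 2}`, pick `g ∈ M` with
`g₀ ≠ 0`. Eliminating the constant term between `g` and any `f ∈ M` gives an element of order
`≥ 1`, hence of order `≥ 2`, so `M ⊆ M_a` for `a = g₁ / g₀`. Conversely every `f ∈ M_a` is the
`R`-multiple `(f / g) g` of `g`, so `M = M_a`.
-/

open PowerSeries

namespace Rcusp

variable {F : Type*} [Field F]

theorem mem_iff {f : F⟦X⟧} : f ∈ Rcusp F ↔ coeff 1 f = 0 := Iff.rfl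

theorem smul_def (r : Rcusp F) (f : F⟦X⟧) : r • f = r * f := rfl

/-- Writing `f = k g`, the proportionality condition reads `coeff 1 k * (g₀)² = 0`. -/
theorem mul_inv_mem {f g : F⟦X⟧} (hg : constantCoeff g ≠ 0)
    (h : coeff 1 f * constantCoeff g = coeff 1 g * constantCoeff f) : f * g⁻¹ ∈ Rcusp F := by
  obtain ⟨k, rfl⟩ : ∃ k, f = k * g :=
    ⟨f * g⁻¹, by rw [mul_assoc, PowerSeries.inv_mul_cancel g hg, mul_one]⟩
  rw [coeff_one_mul, map_mul] at h
  have : coeff 1 k * constantCoeff g ^ 2 = 0 := by linear_combination h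
  rw [mul_assoc, PowerSeries.mul_inv_cancel g hg, mul_one]
  simpa [mem_iff, hg] using this

end Rcusp

section Mmod

variable {F : Type*} [Field F]

theorem mem_Mmod_iff {a : F} {f : F⟦X⟧} : f ∈ Mmod F a ↔ coeff 1 f = a * constantCoeff f := by
  rw [Mmod, Submodule.mem_span_singleton]
  constructor
  · rintro ⟨r, rfl⟩
    simp [Rcusp.smul_def, coeff_one_mul, Rcusp.mem_iff.1 r.2, mul_comm]
  · intro h
    have hu : constantCoeff (1 + C a * X) ≠ 0 := by simp
    refine ⟨⟨f * (1 + C a * X)⁻¹, Rcusp.mul_inv_mem hu (by simp [h])⟩, ?_⟩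
    rw [Rcusp.smul_def, mul_assoc, PowerSeries.inv_mul_cancel _ hu, mul_one]

theorem Mmod_injective : Function.Injective (Mmod F) := by
  intro a b h
  have hmem : 1 + C a * X ∈ Mmod F b := h ▸ Submodule.subset_span rfl
  simpa using mem_Mmod_iff.1 hmem

theorem Mmod_eq_span_singleton {a : F} {g : F⟦X⟧} (hgM : g ∈ Mmod F a)
    (hg : constantCoeff g ≠ 0) : Mmod F a = Submodule.span (Rcusp F) {g} := by
  refine le_antisymm (fun f hf => Submodule.mem_span_singleton.2 ?_)
    ((Submodule.span_singleton_le_iff_mem _ _).2 hgM)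
  rw [mem_Mmod_iff] at hf hgM
  refine ⟨⟨f * g⁻¹, Rcusp.mul_inv_mem hg (by rw [hf, hgM]; ring)⟩, ?_⟩
  rw [Rcusp.smul_def, mul_assoc, PowerSeries.inv_mul_cancel _ hg, mul_one]

theorem valset_Mmod (a : F) : valset F (Mmod F a) = {0} ∪ {n : ℕ | 2 ≤ n} := by
  ext n
  simp only [valset, Set.mem_union, Set.mem_singleton_iff, Set.mem_ofPred_eq]
  constructor
  · rintro ⟨f, hfM, hfn, hlow⟩
    by_contra! hn
    obtain rfl : n = 1 := by omega
    have h0 := hlow 0 one_pos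
    rw [coeff_zero_eq_constantCoeff_apply] at h0
    exact hfn (by rw [mem_Mmod_iff.1 hfM, h0, mul_zero])
  · rintro (rfl | hn)
    · exact ⟨1 + C a * X, Submodule.subset_span rfl, by simp, by simp⟩
    · refine ⟨X ^ n, mem_Mmod_iff.2 ?_, by simp, fun m hm => ?_⟩
      · simp [coeff_X_pow, show 1 ≠ n by omega, show n ≠ 0 by omega]
      · simp [coeff_X_pow, hm.ne]

end Mmod

section valset

variable {F : Type*} [Field F] {M : Submodule (Rcusp F) F⟦X⟧}

theorem le_Mmod_of_one_notMem_valset (hval : 1 ∉ valset F M) {g : F⟦X⟧} (hgM : g ∈ M)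
    (hg : constantCoeff g ≠ 0) : M ≤ Mmod F (coeff 1 g / constantCoeff g) := by
  intro f hfM
  set h := constantCoeff g • f - constantCoeff f • g
  have hM : h ∈ M := sub_mem (M.smul_of_tower_mem _ hfM) (M.smul_of_tower_mem _ hgM)
  have h0 : constantCoeff h = 0 := by simp [h, mul_comm]
  have h1 : coeff 1 h = 0 := by
    by_contra hne
    exact hval ⟨h, hM, hne, fun m hm => by simpa [Nat.lt_one_iff.1 hm] using h0⟩
  rw [mem_Mmod_iff]
  simp only [h, map_sub, map_smul, smul_eq_mul] at h1
  field_simp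
  linear_combination h1

theorem exists_eq_Mmod_of_valset_eq (hM : valset F M = {0} ∪ {n : ℕ | 2 ≤ n}) :
    ∃ a, M = Mmod F a := by
  obtain ⟨g, hgM, hg, -⟩ : 0 ∈ valset F M := by simp [hM]
  rw [coeff_zero_eq_constantCoeff_apply] at hg
  have h1 : 1 ∉ valset F M := by simp [hM]
  have hga : g ∈ Mmod F (coeff 1 g / constantCoeff g) := by
    rw [mem_Mmod_iff, div_mul_cancel₀ _ hg]
  refine ⟨_, le_antisymm (le_Mmod_of_one_notMem_valset h1 hgM hg) ?_⟩
  rw [Mmod_eq_span_singleton hga hg, Submodule.span_singleton_le_iff_mem]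
  exact hgM

theorem existsUnique_eq_Mmod_of_valset_eq (hM : valset F M = {0} ∪ {n : ℕ | 2 ≤ n}) :
    ∃! a, M = Mmod F a := by
  obtain ⟨a, rfl⟩ := exists_eq_Mmod_of_valset_eq hM
  exact ⟨a, rfl, fun b hb => Mmod_injective hb.symm⟩

end valset

/-- For a finite field `F` with `q` elements: the modules `M_a = (1+az)R` are pairwise
distinct, each has valuation set `{0} ∪ {n ≥ 2}`, every `R`-submodule of `O` with this
valuation set is `M_a` for a unique `a ∈ F`, and there are exactly `q = q^δ` (δ = 1)
such modules. -/
theorem stmt16 (F : Type*) [Field F] [Fintype F] (q : ℕ) (hq : Fintype.card F = q) :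
    Function.Injective (fun a : F => Mmod F a) ∧
    (∀ a : F, valset F (Mmod F a) = {0} ∪ {n : ℕ | 2 ≤ n}) ∧
    (∀ M : Submodule ↥(Rcusp F) (PowerSeries F),
      valset F M = {0} ∪ {n : ℕ | 2 ≤ n} → ∃! a : F, M = Mmod F a) ∧
    Nat.card {M : Submodule ↥(Rcusp F) (PowerSeries F) //
      valset F M = {0} ∪ {n : ℕ | 2 ≤ n}} = q := by
  refine ⟨Mmod_injective, valset_Mmod, fun M => existsUnique_eq_Mmod_of_valset_eq, ?_⟩
  have hbij : Function.Bijective fun a : F =>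
      (⟨Mmod F a, valset_Mmod a⟩ : {M // valset F M = {0} ∪ {n : ℕ | 2 ≤ n}}) :=
    ⟨fun a b h => Mmod_injective (congrArg Subtype.val h), fun ⟨M, hM⟩ =>
      (existsUnique_eq_Mmod_of_valset_eq hM).exists.imp fun a ha => Subtype.ext ha.symm⟩
  rw [← hq, ← Nat.card_eq_fintype_card, Nat.card_eq_of_bijective _ hbij]
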